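/- For all integers g1, g2 ≥ 0, setting g = g1 + g2 + 1, the following equality holds in the rationals: (Σ_{l=0}^{3g1+2} (3g1+3-l)·a_{l-1, 3g-l}) / ((6g1+5)!!·(6g2+1)!!) = ((6g-1)!! / (24^g · g! · (6g1+5)!! · (6g2+1)!!)) · ((6g-3)/(6g-1) + Σ_{i=1}^{3g1+1} b_{g,i}). (This expresses that the Bertola–Dubrovin–Yang formula and the Zograf formula for the two-point Witten–Kontsevich correlator ⟨τ_{3g1+2} τ_{3g2}⟩_g agree.) -/

import Mathlib

/-- `dfOdd n = (2n-1)!!`, so `dfOdd 0 = (-1)!! = 1`. -/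
def dfOdd : ℕ → ℚ
  | 0 => 1
  | n + 1 => (2 * n + 1) * dfOdd n

/-- Double factorial `m!!` for odd integers `m ≥ -1` (value irrelevant elsewhere):
`df (2t-1) = (2t-1)!!`, with the convention `(-1)!! = 1`. -/
def df (m : ℤ) : ℚ := dfOdd ((m + 1) / 2).toNat

/-- Factorial of an integer (`m! ` for `m ≥ 0`), as a rational number. -/
def zfact (m : ℤ) : ℚ := (Nat.factorial m.toNat : ℚ)

/-- The Bertola–Dubrovin–Yang coefficients `a_{k1,k2}`. -/
def a (k1 k2 : ℤ) : ℚ :=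
  if k1 % 3 = 1 ∧ k2 % 3 = 1 ∧ 1 ≤ k1 ∧ 1 ≤ k2 then
    -- k1 = 3*g1 - 2, k2 = 3*g2 - 2 with g1, g2 ≥ 1
    let g1 := (k1 + 2) / 3;
    let g2 := (k2 + 2) / 3;
    df (6 * g1 - 5) * df (6 * g2 - 5) /
      (2 * (24 : ℚ) ^ (g1 + g2 - 2) * zfact (g1 - 1) * zfact (g2 - 1))
  else if k1 % 3 = 0 ∧ k2 % 3 = 2 ∧ 0 ≤ k1 ∧ -1 ≤ k2 then
    -- k1 = 3*g1, k2 = 3*g2 - 1 with g1, g2 ≥ 0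
    let g1 := k1 / 3;
    let g2 := (k2 + 1) / 3;
    -(df (6 * g1 - 1) * df (6 * g2 - 1) / ((24 : ℚ) ^ (g1 + g2) * zfact g1 * zfact g2)) *
      ((6 * (g2 : ℚ) + 1) / (6 * (g2 : ℚ) - 1))
  else if k1 % 3 = 2 ∧ k2 % 3 = 0 ∧ -1 ≤ k1 ∧ 0 ≤ k2 then
    -- k1 = 3*g1 - 1, k2 = 3*g2 with g1, g2 ≥ 0
    let g1 := (k1 + 1) / 3;
    let g2 := k2 / 3;
    -(df (6 * g1 - 1) * df (6 * g2 - 1) / ((24 : ℚ) ^ (g1 + g2) * zfact g1 * zfact g2)) *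
      ((6 * (g1 : ℚ) + 1) / (6 * (g1 : ℚ) - 1))
  else 0

/-- The numerator `c_{g,k}` in Zograf's coefficients. -/
def c (g k : ℤ) : ℚ :=
  if k % 3 = 2 then
    -- k = 3*j - 1
    let j := (k + 1) / 3;
    df (6 * j - 1) * zfact (g - 1) / (zfact j * zfact (g - j)) * ((g : ℚ) - 2 * (j : ℚ))
  else if k % 3 = 0 then
    -- k = 3*j
    let j := k / 3;
    -2 * df (6 * j + 1) * zfact (g - 1) / (zfact j * zfact (g - 1 - j))
  else
    -- k = 3*j + 1
    let j := (k - 1) / 3;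
    2 * df (6 * j + 3) * zfact (g - 1) / (zfact j * zfact (g - 1 - j))

/-- Zograf's coefficients `b_{g,k}`. -/
def b (g k : ℤ) : ℚ := df (6 * g - 3 - 2 * k) / df (6 * g - 1) * c g k


/-!
Both sides are multiples of `P g = zografPrefactor g = (6g-1)!! / (24^g g!)`. For
`1 ≤ l ≤ 3g - 1` the coefficients `a` telescope against Zograf's:
`a_{l-1,3g-l} = P g (b_{g,l-1} - b_{g,l-2})`, one rational identity per residue of `l` mod 3 once
`(m+2)!! = (m+2) m!!` and `n! = n (n-1)!` are applied; and `a_{-1,3g} = P g = P g b_{g,-1}`.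
Hence `∑_{l ≤ m} a_{l-1,3g-l} = P g b_{g,m-1}`, and the weighted sum `∑_l (n+1-l) a_{l-1,3g-l}`
is the sum of these partial sums. It remains to note `b_{g,-1} + b_{g,0} = (6g-3)/(6g-1)`.
-/

lemma df_ne_zero (m : ℤ) : df m ≠ 0 := by
  suffices ∀ n, 0 < dfOdd n from (this _).ne'
  intro n
  induction n with
  | zero => norm_num [dfOdd]
  | succ n ih => rw [dfOdd]; positivity

lemma zfact_ne_zero (m : ℤ) : zfact m ≠ 0 :=
  Nat.cast_ne_zero.2 (Nat.factorial_ne_zero _)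

lemma df_eq_mul {m n : ℤ} (hm : -1 ≤ m) (hodd : m % 2 = 1) (hn : n = m + 2) :
    df n = n * df m := by
  have hidx : ((n + 1) / 2).toNat = ((m + 1) / 2).toNat + 1 := by omega
  have hfac : (2 * ((m + 1) / 2).toNat + 1 : ℤ) = n := by omega
  rw [df, df, hidx, dfOdd, ← hfac]
  push_cast
  ring

lemma zfact_eq_mul {m n : ℤ} (hm : 0 ≤ m) (hn : n = m + 1) : zfact n = n * zfact m := by
  have hidx : n.toNat = m.toNat + 1 := by omega
  rw [zfact, zfact, hidx, Nat.factorial_succ, hn]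
  push_cast
  rw [show ((m.toNat : ℕ) : ℚ) = m by exact_mod_cast Int.toNat_of_nonneg hm]

lemma a_three_mul_add_one {g₁ g₂ : ℤ} (h₁ : 0 ≤ g₁) (h₂ : 1 ≤ g₂) :
    a (3 * g₁ + 1) (3 * g₂ - 2) = df (6 * g₁ + 1) * df (6 * g₂ - 5) /
      (2 * (24 : ℚ) ^ (g₁ + g₂ - 1) * zfact g₁ * zfact (g₂ - 1)) := by
  rw [a, if_pos (by omega)]
  simp only [show (3 * g₁ + 1 + 2) / 3 = g₁ + 1 by omega, show (3 * g₂ - 2 + 2) / 3 = g₂ by omega,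
    show 6 * (g₁ + 1) - 5 = 6 * g₁ + 1 by ring, show g₁ + 1 + g₂ - 2 = g₁ + g₂ - 1 by ring,
    show g₁ + 1 - 1 = g₁ by ring]

lemma a_three_mul {g₁ g₂ : ℤ} (h₁ : 0 ≤ g₁) (h₂ : 0 ≤ g₂) :
    a (3 * g₁) (3 * g₂ - 1) =
      -(df (6 * g₁ - 1) * df (6 * g₂ - 1) / ((24 : ℚ) ^ (g₁ + g₂) * zfact g₁ * zfact g₂)) *
        ((6 * (g₂ : ℚ) + 1) / (6 * (g₂ : ℚ) - 1)) := by
  rw [a, if_neg (by omega), if_pos (by omega)]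
  simp only [show 3 * g₁ / 3 = g₁ by omega, show (3 * g₂ - 1 + 1) / 3 = g₂ by omega]

lemma a_three_mul_sub_one {g₁ g₂ : ℤ} (h₁ : 0 ≤ g₁) (h₂ : 0 ≤ g₂) :
    a (3 * g₁ - 1) (3 * g₂) =
      -(df (6 * g₁ - 1) * df (6 * g₂ - 1) / ((24 : ℚ) ^ (g₁ + g₂) * zfact g₁ * zfact g₂)) *
        ((6 * (g₁ : ℚ) + 1) / (6 * (g₁ : ℚ) - 1)) := by
  rw [a, if_neg (by omega), if_neg (by omega), if_pos (by omega)]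
  simp only [show (3 * g₁ - 1 + 1) / 3 = g₁ by omega, show 3 * g₂ / 3 = g₂ by omega]

lemma c_three_mul_sub_one (g j : ℤ) :
    c g (3 * j - 1) =
      df (6 * j - 1) * zfact (g - 1) / (zfact j * zfact (g - j)) * ((g : ℚ) - 2 * (j : ℚ)) := by
  rw [c, if_pos (by omega)]
  simp only [show (3 * j - 1 + 1) / 3 = j by omega]

lemma c_three_mul (g j : ℤ) :
    c g (3 * j) = -2 * df (6 * j + 1) * zfact (g - 1) / (zfact j * zfact (g - 1 - j)) := by
  rw [c, if_neg (by omega), if_pos (by omega)]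
  simp only [show 3 * j / 3 = j by omega]

lemma c_three_mul_add_one (g j : ℤ) :
    c g (3 * j + 1) = 2 * df (6 * j + 3) * zfact (g - 1) / (zfact j * zfact (g - 1 - j)) := by
  rw [c, if_neg (by omega), if_neg (by omega)]
  simp only [show (3 * j + 1 - 1) / 3 = j by omega]

def zografPrefactor (g : ℤ) : ℚ := df (6 * g - 1) / ((24 : ℚ) ^ g * zfact g)

lemma a_neg_one {g : ℤ} (hg : 0 ≤ g) : a (-1) (3 * g) = zografPrefactor g := by
  have h := a_three_mul_sub_one le_rfl hg
  rw [zografPrefactor]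
  norm_num at h
  rw [h, show df (-1) = 1 from rfl, show zfact 0 = 1 from rfl]
  ring

lemma b_neg_one {g : ℤ} (hg : 1 ≤ g) : b g (-1) = 1 := by
  have hc := c_three_mul_sub_one g 0
  norm_num at hc
  rw [b, hc, show df (-1) = 1 from rfl, show zfact 0 = 1 from rfl,
    zfact_eq_mul (m := g - 1) (n := g) (by omega) (by ring)]
  have : (g : ℚ) ≠ 0 := by exact_mod_cast (by omega : g ≠ 0)
  field_simp [df_ne_zero, zfact_ne_zero]
  ring_nf

lemma b_zero {g : ℤ} (hg : 1 ≤ g) : b g 0 = -2 / (6 * g - 1) := by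
  have hc := c_three_mul g 0
  norm_num at hc
  rw [b, hc, show df 1 = 1 by norm_num [df, dfOdd], show zfact 0 = 1 from rfl,
    df_eq_mul (m := 6 * g - 3) (n := 6 * g - 1) (by omega) (by omega) (by ring)]
  have : (6 * g - 1 : ℚ) ≠ 0 := by exact_mod_cast (by omega : 6 * g - 1 ≠ 0)
  push_cast
  field_simp [df_ne_zero, zfact_ne_zero]
  ring_nf

lemma a_three_mul_eq_sub {k h : ℤ} (hk : 0 ≤ k) (hh : 1 ≤ h) :
    a (3 * k) (3 * h - 1) =
      zografPrefactor (k + h) * (b (k + h) (3 * k) - b (k + h) (3 * k - 1)) := by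
  rw [a_three_mul hk (by omega), zografPrefactor, b, b, c_three_mul, c_three_mul_sub_one,
    show 6 * (k + h) - 3 - 2 * (3 * k) = 6 * h - 3 by ring,
    show 6 * (k + h) - 3 - 2 * (3 * k - 1) = 6 * h - 1 by ring,
    show k + h - 1 - k = h - 1 by ring, show k + h - k = h by ring,
    df_eq_mul (m := 6 * k - 1) (n := 6 * k + 1) (by omega) (by omega) (by ring),
    df_eq_mul (m := 6 * h - 3) (n := 6 * h - 1) (by omega) (by omega) (by ring),
    zfact_eq_mul (m := h - 1) (n := h) (by omega) (by ring),
    zfact_eq_mul (m := k + h - 1) (n := k + h) (by omega) (by ring)]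
  have h₁ : (6 * h - 1 : ℚ) ≠ 0 := by exact_mod_cast (by omega : 6 * h - 1 ≠ 0)
  have h₂ : (h : ℚ) ≠ 0 := by exact_mod_cast (by omega : h ≠ 0)
  have h₃ : (k + h : ℚ) ≠ 0 := by exact_mod_cast (by omega : k + h ≠ 0)
  push_cast
  field_simp [df_ne_zero, zfact_ne_zero]
  ring

lemma a_three_mul_add_one_eq_sub {k h : ℤ} (hk : 0 ≤ k) (hh : 1 ≤ h) :
    a (3 * k + 1) (3 * h - 2) =
      zografPrefactor (k + h) * (b (k + h) (3 * k + 1) - b (k + h) (3 * k)) := by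
  rw [a_three_mul_add_one hk hh, zografPrefactor, b, b, c_three_mul_add_one, c_three_mul,
    show 6 * (k + h) - 3 - 2 * (3 * k + 1) = 6 * h - 5 by ring,
    show 6 * (k + h) - 3 - 2 * (3 * k) = 6 * h - 3 by ring,
    show k + h - 1 - k = h - 1 by ring,
    df_eq_mul (m := 6 * k + 1) (n := 6 * k + 3) (by omega) (by omega) (by ring),
    df_eq_mul (m := 6 * h - 5) (n := 6 * h - 3) (by omega) (by omega) (by ring),
    zfact_eq_mul (m := k + h - 1) (n := k + h) (by omega) (by ring),
    zpow_sub_one₀ (by norm_num)]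
  have h₃ : (k + h : ℚ) ≠ 0 := by exact_mod_cast (by omega : k + h ≠ 0)
  push_cast
  field_simp [df_ne_zero, zfact_ne_zero]
  ring

lemma a_three_mul_sub_one_eq_sub {k h : ℤ} (hk : 1 ≤ k) (hh : 0 ≤ h) :
    a (3 * k - 1) (3 * h) =
      zografPrefactor (k + h) * (b (k + h) (3 * k - 1) - b (k + h) (3 * k - 2)) := by
  rw [a_three_mul_sub_one (by omega) hh, zografPrefactor, b, b, c_three_mul_sub_one,
    show 3 * k - 2 = 3 * (k - 1) + 1 by ring, c_three_mul_add_one,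
    show 6 * (k + h) - 3 - 2 * (3 * k - 1) = 6 * h - 1 by ring,
    show 6 * (k + h) - 3 - 2 * (3 * (k - 1) + 1) = 6 * h + 1 by ring,
    show k + h - 1 - (k - 1) = h by ring, show k + h - k = h by ring,
    show 6 * (k - 1) + 3 = 6 * k - 3 by ring,
    df_eq_mul (m := 6 * h - 1) (n := 6 * h + 1) (by omega) (by omega) (by ring),
    df_eq_mul (m := 6 * k - 3) (n := 6 * k - 1) (by omega) (by omega) (by ring),
    zfact_eq_mul (m := k - 1) (n := k) (by omega) (by ring),
    zfact_eq_mul (m := k + h - 1) (n := k + h) (by omega) (by ring)]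
  have h₁ : (6 * k - 1 : ℚ) ≠ 0 := by exact_mod_cast (by omega : 6 * k - 1 ≠ 0)
  have h₂ : (k : ℚ) ≠ 0 := by exact_mod_cast (by omega : k ≠ 0)
  have h₃ : (k + h : ℚ) ≠ 0 := by exact_mod_cast (by omega : k + h ≠ 0)
  push_cast
  field_simp [df_ne_zero, zfact_ne_zero]
  ring

lemma a_sub_one_eq_sub {g l : ℤ} (hl₁ : 1 ≤ l) (hl₂ : l ≤ 3 * g - 1) :
    a (l - 1) (3 * g - l) = zografPrefactor g * (b g (l - 1) - b g (l - 2)) := by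
  obtain ⟨k, rfl | rfl | rfl⟩ : ∃ k, l = 3 * k + 1 ∨ l = 3 * k + 2 ∨ l = 3 * k + 3 := by
    refine ⟨(l - 1) / 3, ?_⟩; omega
  · have h := a_three_mul_eq_sub (k := k) (h := g - k) (by omega) (by omega)
    rw [add_sub_cancel] at h
    convert h using 2 <;> ring_nf
  · have h := a_three_mul_add_one_eq_sub (k := k) (h := g - k) (by omega) (by omega)
    rw [add_sub_cancel] at h
    convert h using 2 <;> ring_nf
  · have h := a_three_mul_sub_one_eq_sub (k := k + 1) (h := g - (k + 1)) (by omega) (by omega)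
    rw [add_sub_cancel] at h
    convert h using 2 <;> ring_nf

lemma sum_Icc_a_eq {g m : ℤ} (hm₀ : 0 ≤ m) (hm : m ≤ 3 * g - 1) :
    ∑ l ∈ Finset.Icc 0 m, a (l - 1) (3 * g - l) = zografPrefactor g * b g (m - 1) := by
  induction m, hm₀ using Int.leInduction with
  | base => simp [a_neg_one (by omega : 0 ≤ g), b_neg_one (by omega : 1 ≤ g)]
  | succ m hm₀ ih =>
    rw [← Finset.insert_Icc_right_eq_Icc_add_one (by omega), Finset.sum_insert (by simp),
      ih (by omega), a_sub_one_eq_sub (by omega) hm]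
    ring_nf

lemma sum_Icc_zsmul_eq_sum_sum {M : Type*} [AddCommGroup M] (f : ℤ → M) (n : ℤ) :
    ∑ l ∈ Finset.Icc 0 n, (n + 1 - l) • f l = ∑ m ∈ Finset.Icc 0 n, ∑ l ∈ Finset.Icc 0 m, f l := by
  rw [Finset.sum_comm' (t' := Finset.Icc 0 n) (s' := fun l ↦ Finset.Icc l n)
    (fun m l ↦ by simp only [Finset.mem_Icc]; omega)]
  refine Finset.sum_congr rfl fun l hl ↦ ?_
  rw [Finset.sum_const, Int.card_Icc, ← natCast_zsmul, Int.toNat_of_nonneg (by simp at hl; omega)]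

lemma sum_Icc_sub_one {M : Type*} [AddCommMonoid M] (f : ℤ → M) (m n : ℤ) :
    ∑ l ∈ Finset.Icc m n, f (l - 1) = ∑ i ∈ Finset.Icc (m - 1) (n - 1), f i :=
  Finset.sum_nbij' (· - 1) (· + 1) (by simp) (by simp) (by simp) (by simp) (by simp)

theorem stmt1 (g1 g2 g : ℤ) (hg1 : 0 ≤ g1) (hg2 : 0 ≤ g2) (hg : g = g1 + g2 + 1) :
    (∑ l ∈ Finset.Icc (0 : ℤ) (3 * g1 + 2), ((3 * g1 + 3 - l : ℤ) : ℚ) * a (l - 1) (3 * g - l)) /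
        (df (6 * g1 + 5) * df (6 * g2 + 1)) =
      df (6 * g - 1) / ((24 : ℚ) ^ g * zfact g * df (6 * g1 + 5) * df (6 * g2 + 1)) *
        ((6 * (g : ℚ) - 3) / (6 * (g : ℚ) - 1) + ∑ i ∈ Finset.Icc (1 : ℤ) (3 * g1 + 1), b g i) := by
  have hsum :
      ∑ l ∈ Finset.Icc (0 : ℤ) (3 * g1 + 2), ((3 * g1 + 3 - l : ℤ) : ℚ) * a (l - 1) (3 * g - l) =
        zografPrefactor g * ∑ i ∈ Finset.Icc (-1 : ℤ) (3 * g1 + 1), b g i := by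
    calc _ = ∑ l ∈ Finset.Icc (0 : ℤ) (3 * g1 + 2), (3 * g1 + 2 + 1 - l) • a (l - 1) (3 * g - l) :=
          Finset.sum_congr rfl fun l _ ↦ by
            rw [zsmul_eq_mul, show 3 * g1 + 2 + 1 - l = 3 * g1 + 3 - l by ring]
      _ = ∑ m ∈ Finset.Icc (0 : ℤ) (3 * g1 + 2), zografPrefactor g * b g (m - 1) := by
          rw [sum_Icc_zsmul_eq_sum_sum]
          exact Finset.sum_congr rfl fun m hm ↦ by
            rw [Finset.mem_Icc] at hm; exact sum_Icc_a_eq hm.1 (by omega)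
      _ = _ := by
          rw [← Finset.mul_sum, sum_Icc_sub_one (b g), zero_sub,
            show 3 * g1 + 2 - 1 = 3 * g1 + 1 by ring]
  have hb : b g (-1) + b g 0 = (6 * g - 3) / (6 * g - 1) := by
    have : (6 * g - 1 : ℚ) ≠ 0 := by exact_mod_cast (by omega : 6 * g - 1 ≠ 0)
    rw [b_neg_one (by omega), b_zero (by omega)]
    field_simp
    ring
  rw [hsum, ← Finset.insert_Icc_add_one_left_eq_Icc (by omega), Finset.sum_insert (by simp),
    show (-1 + 1 : ℤ) = 0 by norm_num, ← Finset.insert_Icc_add_one_left_eq_Icc (by omega),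
    Finset.sum_insert (by simp), zero_add, ← add_assoc, hb, zografPrefactor]
  field_simp
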